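/- arXiv:2404.04874 — 5 statements merged into one kernel-verified Lean document; each statement's English description precedes it below -/
import Mathlib

section
/- Let x₀ be a minimizer over binary vectors of f(x; b, A) = xᵀAx + bᵀx, let δ ∈ ℝ^k, let ε > 0, and let x_ε be a minimizer over binary vectors of the perturbed objective f(x; b, A) + ε δᵀx. Then the difference quotient of the optimal value is bounded by δᵀ x_ε ≤ (f_ε − f₀)/ε ≤ δᵀ x₀, where f₀ = f(x₀; b, A) and f_ε = f(x_ε; b, A) + ε δᵀ x_ε. (This gives the Clarke-derivative bound of Theorem 4.3.) -/
open Matrix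

/-- For ε > 0, the difference quotient of the optimal value is bounded:
δᵀ x_ε ≤ (f_ε − f₀)/ε ≤ δᵀ x₀ (Clarke-derivative bound of Theorem 4.3). -/
theorem qubo_difference_quotient_bound (k : ℕ) (A : Matrix (Fin k) (Fin k) ℝ)
    (b δ : Fin k → ℝ) (ε : ℝ) (hε : 0 < ε) (x₀ xε : Fin k → ℝ)
    (hx₀bin : ∀ i, x₀ i = 0 ∨ x₀ i = 1)
    (hx₀min : ∀ y : Fin k → ℝ, (∀ i, y i = 0 ∨ y i = 1) →
      x₀ ⬝ᵥ A.mulVec x₀ + x₀ ⬝ᵥ b ≤ y ⬝ᵥ A.mulVec y + y ⬝ᵥ b)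
    (hxεbin : ∀ i, xε i = 0 ∨ xε i = 1)
    (hxεmin : ∀ y : Fin k → ℝ, (∀ i, y i = 0 ∨ y i = 1) →
      xε ⬝ᵥ A.mulVec xε + xε ⬝ᵥ b + ε * (δ ⬝ᵥ xε) ≤
        y ⬝ᵥ A.mulVec y + y ⬝ᵥ b + ε * (δ ⬝ᵥ y)) :
    δ ⬝ᵥ xε ≤
      ((xε ⬝ᵥ A.mulVec xε + xε ⬝ᵥ b + ε * (δ ⬝ᵥ xε)) -
        (x₀ ⬝ᵥ A.mulVec x₀ + x₀ ⬝ᵥ b)) / ε ∧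
    ((xε ⬝ᵥ A.mulVec xε + xε ⬝ᵥ b + ε * (δ ⬝ᵥ xε)) -
        (x₀ ⬝ᵥ A.mulVec x₀ + x₀ ⬝ᵥ b)) / ε ≤ δ ⬝ᵥ x₀ := by
  have h1 := hx₀min xε hxεbin
  have h2 := hxεmin x₀ hx₀bin
  constructor
  · rw [le_div_iff₀ hε]; linarith
  · rw [div_le_iff₀ hε]; linarith
end

section
/- Fix k : ℕ, A ∈ ℝ^{k×k}, b ∈ ℝ^k, a coordinate j, and ε > 0. Let x₀ be any minimizer over binary vectors of f(x; b, A) and let x_ε be any minimizer over binary vectors of f(x; b + ε·e_j, A). Then the j-th coordinates satisfy (x_ε)_j ≤ (x₀)_j; i.e., increasing the j-th entry of the observed vector b can only decrease the j-th coordinate of an optimal binary solution. -/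
open Matrix

/-- If x₀ minimizes f(x; b, A) over binary vectors and x_ε minimizes
f(x; b + ε·e_j, A) over binary vectors with ε > 0, then (x_ε)_j ≤ (x₀)_j. -/
theorem qubo_coordinate_monotonicity (k : ℕ) (A : Matrix (Fin k) (Fin k) ℝ)
    (b : Fin k → ℝ) (j : Fin k) (ε : ℝ) (hε : 0 < ε) (x₀ xε : Fin k → ℝ)
    (hx₀bin : ∀ i, x₀ i = 0 ∨ x₀ i = 1)
    (hx₀min : ∀ y : Fin k → ℝ, (∀ i, y i = 0 ∨ y i = 1) →
      x₀ ⬝ᵥ A.mulVec x₀ + x₀ ⬝ᵥ b ≤ y ⬝ᵥ A.mulVec y + y ⬝ᵥ b)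
    (hxεbin : ∀ i, xε i = 0 ∨ xε i = 1)
    (hxεmin : ∀ y : Fin k → ℝ, (∀ i, y i = 0 ∨ y i = 1) →
      xε ⬝ᵥ A.mulVec xε + xε ⬝ᵥ (b + ε • (Pi.single j 1 : Fin k → ℝ)) ≤
        y ⬝ᵥ A.mulVec y + y ⬝ᵥ (b + ε • (Pi.single j 1 : Fin k → ℝ))) :
    xε j ≤ x₀ j := by
  have h1 := hx₀min xε hxεbin
  have h2 := hxεmin x₀ hx₀bin
  simp only [dotProduct_add, dotProduct_smul, dotProduct_single, smul_eq_mul, mul_one] at h2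
  nlinarith [h1, h2]
end

section
/- Fix k : ℕ, A ∈ ℝ^{k×k}, b ∈ ℝ^k, and a coordinate j. Let x₀ be a minimizer over binary vectors of f(x; b, A) with (x₀)_j = 0. Then for every ε ≥ 0, x₀ is also a minimizer over binary vectors of the perturbed objective f(x; b + ε·e_j, A), and consequently M(b + ε·e_j) = M(b). (This is the ε > 0 half of Observation 4.4: the optimal solution is locally constant under such perturbations of b.) -/
open Matrix

/-- The QUBO objective f(x; b, A) = xᵀAx + bᵀx. -/
noncomputable def quboObj {k : ℕ} (A : Matrix (Fin k) (Fin k) ℝ) (b x : Fin k → ℝ) : ℝ :=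
  x ⬝ᵥ A.mulVec x + x ⬝ᵥ b

/-- The binary vector in ℝ^k associated to s : Fin k → Bool. -/
noncomputable def binVec {k : ℕ} (s : Fin k → Bool) : Fin k → ℝ :=
  fun i => if s i then 1 else 0

/-- The optimal value function M(b) = min over binary x ∈ {0,1}^k of xᵀAx + bᵀx. -/
noncomputable def quboOptVal {k : ℕ} (A : Matrix (Fin k) (Fin k) ℝ) (b : Fin k → ℝ) : ℝ :=
  ⨅ s : Fin k → Bool, quboObj A b (binVec s)

lemma quboObj_shift {k : ℕ} (A : Matrix (Fin k) (Fin k) ℝ) (b x : Fin k → ℝ)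
    (j : Fin k) (ε : ℝ) :
    quboObj A (b + ε • (Pi.single j 1 : Fin k → ℝ)) x = quboObj A b x + ε * x j := by
  simp [quboObj, dotProduct_add, dotProduct_smul, dotProduct_single]
  ring

/-- If x₀ is a binary minimizer of f(x; b, A) with (x₀)_j = 0, then for
every ε ≥ 0, x₀ also minimizes f(x; b + ε·e_j, A) over binary vectors, and
M(b + ε·e_j) = M(b) (the ε > 0 half of Observation 4.4). -/
theorem qubo_locally_constant_pos (k : ℕ) (A : Matrix (Fin k) (Fin k) ℝ)
    (b : Fin k → ℝ) (j : Fin k) (x₀ : Fin k → ℝ)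
    (hx₀bin : ∀ i, x₀ i = 0 ∨ x₀ i = 1)
    (hx₀min : ∀ y : Fin k → ℝ, (∀ i, y i = 0 ∨ y i = 1) →
      quboObj A b x₀ ≤ quboObj A b y)
    (hj : x₀ j = 0) :
    ∀ ε : ℝ, 0 ≤ ε →
      (∀ y : Fin k → ℝ, (∀ i, y i = 0 ∨ y i = 1) →
        quboObj A (b + ε • (Pi.single j 1 : Fin k → ℝ)) x₀ ≤
          quboObj A (b + ε • (Pi.single j 1 : Fin k → ℝ)) y) ∧
      quboOptVal A (b + ε • (Pi.single j 1 : Fin k → ℝ)) = quboOptVal A b := by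
  intro ε hε
  have hbin : ∀ s : Fin k → Bool, ∀ i, binVec s i = 0 ∨ binVec s i = 1 := by
    intro s i; by_cases h : s i <;> simp [binVec, h]
  have hmin : ∀ y : Fin k → ℝ, (∀ i, y i = 0 ∨ y i = 1) →
      quboObj A (b + ε • (Pi.single j 1 : Fin k → ℝ)) x₀ ≤
        quboObj A (b + ε • (Pi.single j 1 : Fin k → ℝ)) y := by
    intro y hy
    rw [quboObj_shift, quboObj_shift, hj, mul_zero, add_zero]
    have hyj : 0 ≤ y j := by rcases hy j with h | h <;> simp [h]
    have := hx₀min y hy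
    nlinarith
  refine ⟨hmin, ?_⟩
  set s₀ : Fin k → Bool := fun i => decide (x₀ i = 1) with hs₀
  have hx₀eq : binVec s₀ = x₀ := by
    funext i
    rcases hx₀bin i with h | h <;> simp [binVec, hs₀, h]
  have hopt : ∀ (c : Fin k → ℝ), (∀ y : Fin k → ℝ, (∀ i, y i = 0 ∨ y i = 1) →
      quboObj A c x₀ ≤ quboObj A c y) → quboOptVal A c = quboObj A c x₀ := by
    intro c hc
    apply le_antisymm
    · calc quboOptVal A c ≤ quboObj A c (binVec s₀) :=
            ciInf_le (Set.Finite.bddBelow (Set.finite_range _)) s₀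
        _ = quboObj A c x₀ := by rw [hx₀eq]
    · exact le_ciInf fun s => hc _ (hbin s)
  rw [hopt _ hmin, hopt _ hx₀min, quboObj_shift, hj, mul_zero, add_zero]
end

section
/- Fix k : ℕ, A ∈ ℝ^{k×k}, b ∈ ℝ^k, a coordinate j, and ε > 0. Suppose some minimizer x₀ over binary vectors of f(x; b, A) satisfies (x₀)_j = 0. Then every minimizer x_ε over binary vectors of the perturbed objective f(x; b + ε·e_j, A) satisfies (x_ε)_j = 0. -/
open Matrix

/-- If some binary minimizer x₀ of f(x; b, A) has (x₀)_j = 0, then for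
ε > 0 every binary minimizer x_ε of f(x; b + ε·e_j, A) has (x_ε)_j = 0. -/
theorem qubo_perturbed_minimizer_coord_zero (k : ℕ) (A : Matrix (Fin k) (Fin k) ℝ)
    (b : Fin k → ℝ) (j : Fin k) (ε : ℝ) (hε : 0 < ε) (x₀ : Fin k → ℝ)
    (hx₀bin : ∀ i, x₀ i = 0 ∨ x₀ i = 1)
    (hx₀min : ∀ y : Fin k → ℝ, (∀ i, y i = 0 ∨ y i = 1) →
      x₀ ⬝ᵥ A.mulVec x₀ + x₀ ⬝ᵥ b ≤ y ⬝ᵥ A.mulVec y + y ⬝ᵥ b)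
    (hj : x₀ j = 0) :
    ∀ xε : Fin k → ℝ, (∀ i, xε i = 0 ∨ xε i = 1) →
      (∀ y : Fin k → ℝ, (∀ i, y i = 0 ∨ y i = 1) →
        xε ⬝ᵥ A.mulVec xε + xε ⬝ᵥ (b + ε • (Pi.single j 1 : Fin k → ℝ)) ≤
          y ⬝ᵥ A.mulVec y + y ⬝ᵥ (b + ε • (Pi.single j 1 : Fin k → ℝ))) →
      xε j = 0 := by
  intro xε hbin hmin
  have key : ∀ v : Fin k → ℝ, v ⬝ᵥ (b + ε • (Pi.single j 1 : Fin k → ℝ))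
      = v ⬝ᵥ b + ε * v j := by
    intro v
    rw [dotProduct_add, dotProduct_smul, dotProduct_single]
    rw [smul_eq_mul]; ring
  rcases hbin j with h | h
  · exact h
  exfalso
  have h1 := hmin x₀ hx₀bin
  rw [key, key, hj, h] at h1
  have h2 := hx₀min xε hbin
  linarith
end

section
/- Fix k : ℕ, A ∈ ℝ^{k×k}, b ∈ ℝ^k, a coordinate j, and ε < 0. Suppose some minimizer x₀ over binary vectors of f(x; b, A) satisfies (x₀)_j = 1. Then every minimizer x_ε over binary vectors of the perturbed objective f(x; b + ε·e_j, A) satisfies (x_ε)_j = 1. -/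
open Matrix

/-- If some binary minimizer x₀ of f(x; b, A) has (x₀)_j = 1, then for
ε < 0 every binary minimizer x_ε of f(x; b + ε·e_j, A) has (x_ε)_j = 1. -/
theorem qubo_perturbed_minimizer_coord_one (k : ℕ) (A : Matrix (Fin k) (Fin k) ℝ)
    (b : Fin k → ℝ) (j : Fin k) (ε : ℝ) (hε : ε < 0) (x₀ : Fin k → ℝ)
    (hx₀bin : ∀ i, x₀ i = 0 ∨ x₀ i = 1)
    (hx₀min : ∀ y : Fin k → ℝ, (∀ i, y i = 0 ∨ y i = 1) →
      x₀ ⬝ᵥ A.mulVec x₀ + x₀ ⬝ᵥ b ≤ y ⬝ᵥ A.mulVec y + y ⬝ᵥ b)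
    (hj : x₀ j = 1) :
    ∀ xε : Fin k → ℝ, (∀ i, xε i = 0 ∨ xε i = 1) →
      (∀ y : Fin k → ℝ, (∀ i, y i = 0 ∨ y i = 1) →
        xε ⬝ᵥ A.mulVec xε + xε ⬝ᵥ (b + ε • (Pi.single j 1 : Fin k → ℝ)) ≤
          y ⬝ᵥ A.mulVec y + y ⬝ᵥ (b + ε • (Pi.single j 1 : Fin k → ℝ))) →
      xε j = 1 := by
  intro xε hbin hmin
  rcases hbin j with h0 | h1
  · exfalso
    have key : ∀ v : Fin k → ℝ,
        v ⬝ᵥ (b + ε • (Pi.single j 1 : Fin k → ℝ)) = v ⬝ᵥ b + ε * v j := by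
      intro v
      rw [dotProduct_add, dotProduct_smul, dotProduct_single]
      rw [smul_eq_mul]; ring
    have h1 := hmin x₀ hx₀bin
    rw [key, key, h0, hj, mul_zero, mul_one, add_zero] at h1
    have h2 := hx₀min xε hbin
    linarith
  · exact h1
end
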